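/- Soundness of the intersection type system with respect to λ⊥-models: if Γ ⊢ M : σ, then for every λ⊥-model M and all term- and type-variable valuations V, W respecting Γ, the interpretation of M under V belongs to the interpretation of σ under W. -/

import Mathlib

/-- Terms of the λ⊥-calculus (de Bruijn indices). -/
inductive Tm : Type
  | var : ℕ → Tm
  | bot : Tm
  | lam : Tm → Tm
  | app : Tm → Tm → Tm
  deriving DecidableEq

namespace Tm

/-- Lift (shift by one) all de Bruijn indices ≥ k. -/
def lift : Tm → ℕ → Tm
  | var n, k => if n < k then var n else var (n+1)
  | bot, _ => bot
  | lam M, k => lam (lift M (k+1))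
  | app M N, k => app (lift M k) (lift N k)

/-- Capture-avoiding substitution of N for variable k. -/
def subst : Tm → ℕ → Tm → Tm
  | var n, k, N => if n < k then var n else if n = k then N else var (n-1)
  | bot, _, _ => bot
  | lam M, k, N => lam (subst M (k+1) (lift N 0))
  | app M P, k, N => app (subst M k N) (subst P k N)

/-- One-step β⊥-reduction (compatible closure). -/
inductive Step : Tm → Tm → Prop
  | beta (M N : Tm) : Step (app (lam M) N) (subst M 0 N)
  | botApp (N : Tm) : Step (app bot N) bot
  | botLam : Step (lam bot) bot
  | appL {M M'} (N) : Step M M' → Step (app M N) (app M' N)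
  | appR (M) {N N'} : Step N N' → Step (app M N) (app M N')
  | lamC {M M'} : Step M M' → Step (lam M) (lam M')

/-- Multi-step reduction. -/
def Red : Tm → Tm → Prop := Relation.ReflTransGen Step

/-- β⊥-conversion: M = N iff they have a common reduct. -/
def Conv (M N : Tm) : Prop := ∃ P, Red M P ∧ Red N P

/-- The identity combinator I = λx.x. -/
def iTm : Tm := lam (var 0)

/-- Composition M ∘ N = λz.M(Nz). -/
def comp (M N : Tm) : Tm := lam (app (lift M 0) (app (lift N 0) (var 0)))

/-- Apply M to a list of arguments. -/
def applist (M : Tm) (Ms : List Tm) : Tm := Ms.foldl app M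

/-- Iterated λ-abstraction. -/
def iterLam : ℕ → Tm → Tm
  | 0, M => M
  | n+1, M => lam (iterLam n M)

/-- The selector λt x₁ … xₘ. t  (a simple right inverse). -/
def sel (m : ℕ) : Tm := iterLam (m+1) (var m)

/-- Number of initial λ-abstractions of a term. -/
def leadLams : Tm → ℕ
  | lam M => leadLams M + 1
  | _ => 0

end Tm

/-- Standard intersection types σ ::= φ | ω | σ → σ | σ ∧ σ. -/
inductive Ty : Type
  | tvar : ℕ → Ty
  | omega : Ty
  | arrow : Ty → Ty → Ty
  | inter : Ty → Ty → Ty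
  deriving DecidableEq

/-- The subtyping preorder on standard intersection types. -/
inductive SubT : Ty → Ty → Prop
  | refl (σ) : SubT σ σ
  | trans {σ τ ρ} : SubT σ τ → SubT τ ρ → SubT σ ρ
  | toOmega (σ) : SubT σ .omega
  | omegaArr : SubT .omega (.arrow .omega .omega)
  | interL (σ τ) : SubT (.inter σ τ) σ
  | interR (σ τ) : SubT (.inter σ τ) τ
  | interMono {σ₁ σ₂ τ₁ τ₂} : SubT σ₁ τ₁ → SubT σ₂ τ₂ → SubT (.inter σ₁ σ₂) (.inter τ₁ τ₂)
  | arrow {σ τ μ ν} : SubT τ σ → SubT μ ν → SubT (.arrow σ μ) (.arrow τ ν)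
  | distr (σ τ ρ) : SubT (.inter (.arrow σ τ) (.arrow σ ρ)) (.arrow σ (.inter τ ρ))

/-- σ ∼ τ : mutual subtyping. -/
def EqvT (σ τ : Ty) : Prop := SubT σ τ ∧ SubT τ σ

/-- The standard intersection type assignment system (contexts are de Bruijn lists). -/
inductive DerT : List Ty → Tm → Ty → Prop
  | var {Γ n σ} : Γ[n]? = some σ → DerT Γ (.var n) σ
  | omega (Γ M) : DerT Γ M .omega
  | sub {Γ M σ τ} : DerT Γ M σ → SubT σ τ → DerT Γ M τ
  | lam {Γ M σ τ} : DerT (σ :: Γ) M τ → DerT Γ (.lam M) (.arrow σ τ)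
  | app {Γ M N σ τ} : DerT Γ M (.arrow σ τ) → DerT Γ N σ → DerT Γ (.app M N) τ
  | interI {Γ M σ τ} : DerT Γ M σ → DerT Γ M τ → DerT Γ M (.inter σ τ)

/-- Intersection of a (nonempty) list of types. -/
def listInter : List Ty → Ty
  | [] => .omega
  | [t] => t
  | t :: ts => .inter t (listInter ts)

/-- ρ₁ → … → ρₘ → σ. -/
def arrowsT (l : List Ty) (σ : Ty) : Ty := l.foldr .arrow σ

/-- A (Hindley–Longo style) model of the λ⊥-calculus, with de Bruijn valuations. -/
structure LBotModel where
  D : Type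
  ap : D → D → D
  int : Tm → (ℕ → D) → D
  d0 : D
  d0_ap : ∀ e, ap d0 e = d0
  int_var : ∀ n V, int (.var n) V = V n
  int_app : ∀ M N V, int (.app M N) V = ap (int M V) (int N V)
  int_lam : ∀ M V d,
    ap (int (.lam M) V) d = int M (fun n => match n with | 0 => d | n+1 => V n)
  weak_ext : ∀ M N V,
    (∀ d, int M (fun n => match n with | 0 => d | n+1 => V n) =
          int N (fun n => match n with | 0 => d | n+1 => V n)) →
    int (.lam M) V = int (.lam N) V
  int_bot : ∀ V, int .bot V = d0
  int_lam_bot : ∀ V, int (.lam .bot) V = d0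

/-- Interpretation of types as subsets of the domain. -/
def tyInt (Mo : LBotModel) (W : ℕ → Set Mo.D) : Ty → Set Mo.D
  | .tvar n => W n
  | .omega => Set.univ
  | .arrow σ τ => {d | ∀ e ∈ tyInt Mo W σ, Mo.ap d e ∈ tyInt Mo W τ}
  | .inter σ τ => tyInt Mo W σ ∩ tyInt Mo W τ

/-- The valuations V, W respect the environment Γ. -/
def Respects (Mo : LBotModel) (V : ℕ → Mo.D) (W : ℕ → Set Mo.D) (Γ : List Ty) : Prop :=
  ∀ n σ, Γ[n]? = some σ → V n ∈ tyInt Mo W σ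


theorem SubT.tyInt_subset (Mo : LBotModel) (W : ℕ → Set Mo.D) {σ τ : Ty} (h : SubT σ τ) :
    tyInt Mo W σ ⊆ tyInt Mo W τ := by
  induction h with
  | refl => exact subset_rfl
  | trans _ _ ih₁ ih₂ => exact ih₁.trans ih₂
  | toOmega => exact Set.subset_univ _
  | omegaArr => exact fun _ _ _ _ => trivial
  | interL => exact Set.inter_subset_left
  | interR => exact Set.inter_subset_right
  | interMono _ _ ih₁ ih₂ => exact Set.inter_subset_inter ih₁ ih₂
  | arrow _ _ ih₁ ih₂ => exact fun _ hd e he => ih₂ (hd e (ih₁ he))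
  | distr => exact fun _ hd e he => ⟨hd.1 e he, hd.2 e he⟩

theorem Respects.cons {Mo : LBotModel} {V : ℕ → Mo.D} {W : ℕ → Set Mo.D} {Γ : List Ty}
    (hV : Respects Mo V W Γ) {σ : Ty} {d : Mo.D} (hd : d ∈ tyInt Mo W σ) :
    Respects Mo (fun n => match n with | 0 => d | n+1 => V n) W (σ :: Γ) := by
  rintro (_ | n) τ hn
  · cases hn
    exact hd
  · exact hV n τ hn

/-- soundness of the intersection type system w.r.t. λ⊥-models. -/
theorem soundness {Γ : List Ty} {M : Tm} {σ : Ty} (h : DerT Γ M σ) :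
    ∀ (Mo : LBotModel) (V : ℕ → Mo.D) (W : ℕ → Set Mo.D),
      Respects Mo V W Γ → Mo.int M V ∈ tyInt Mo W σ := by
  induction h with
  | var hn => exact fun Mo V W hV => Mo.int_var .. ▸ hV _ _ hn
  | omega => exact fun _ _ _ _ => trivial
  | sub _ hsub ih => exact fun Mo V W hV => hsub.tyInt_subset Mo W (ih Mo V W hV)
  | lam _ ih => exact fun Mo V W hV d hd => Mo.int_lam .. ▸ ih Mo _ W (hV.cons hd)
  | app _ _ ihM ihN => exact fun Mo V W hV => Mo.int_app .. ▸ ihM Mo V W hV _ (ihN Mo V W hV)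
  | interI _ _ ih₁ ih₂ => exact fun Mo V W hV => ⟨ih₁ Mo V W hV, ih₂ Mo V W hV⟩
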